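/- arXiv:2301.09187 — 8 statements merged into one kernel-verified Lean document; each statement's English description precedes it below -/
import Mathlib

section
/- Let G₁, G₂ be graphs on node set {1,…,n} with adjacency matrices A₁, A₂, and fix nodes i₁, i₂. Define 𝔴_{G}(i) as the n×ℕ matrix whose (j,l) entry is the number of walks of length l from i to j (i.e., the l-th column is A^l e_i). Then there exists a permutation matrix P with P·𝔴_{G₁}(i₁) = 𝔴_{G₂}(i₂) (as infinite matrices) if and only if there exists a permutation matrix P with P·(first n+1 columns of 𝔴_{G₁}(i₁)) = (first n+1 columns of 𝔴_{G₂}(i₂)). -/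
lemma pow_eq_sum_of_charpoly {n : ℕ} (B : Matrix (Fin n) (Fin n) ℤ) :
    B ^ n = ∑ l ∈ Finset.range n, (-(B.charpoly.coeff l)) • B ^ l := by
  have h0 := Matrix.aeval_self_charpoly B
  have hdeg : B.charpoly.natDegree = n := by
    simp [B.charpoly_natDegree_eq_dim]
  have hmonic : B.charpoly.Monic := B.charpoly_monic
  have := Polynomial.aeval_eq_sum_range (x := B) (p := B.charpoly)
  rw [hdeg, Finset.sum_range_succ] at this
  rw [this] at h0
  have hc : B.charpoly.coeff n = 1 := by
    have := hmonic.coeff_natDegree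
    rwa [hdeg] at this
  rw [hc, one_smul] at h0
  have : B ^ n = -(∑ i ∈ Finset.range n, B.charpoly.coeff i • B ^ i) :=
    eq_neg_of_add_eq_zero_right h0
  rw [this, ← Finset.sum_neg_distrib]
  congr 1; ext i; rw [neg_smul]

lemma sum_mulVec' {n : ℕ} (s : Finset ℕ) (f : ℕ → Matrix (Fin n) (Fin n) ℤ)
    (x : Fin n → ℤ) : (∑ l ∈ s, f l).mulVec x = ∑ l ∈ s, (f l).mulVec x := by
  induction s using Finset.cons_induction with
  | empty => simp [Matrix.zero_mulVec]
  | cons a s ha ih => rw [Finset.sum_cons, Finset.sum_cons, Matrix.add_mulVec, ih]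

lemma mulVec_sum' {n : ℕ} (s : Finset ℕ) (C : Matrix (Fin n) (Fin n) ℤ)
    (g : ℕ → Fin n → ℤ) : C.mulVec (∑ l ∈ s, g l) = ∑ l ∈ s, C.mulVec (g l) := by
  induction s using Finset.cons_induction with
  | empty => simp [Matrix.mulVec_zero]
  | cons a s ha ih => rw [Finset.sum_cons, Finset.sum_cons, Matrix.mulVec_add, ih]

lemma krylov_agree {n : ℕ} (B C : Matrix (Fin n) (Fin n) ℤ) (v u : ℕ → Fin n → ℤ)
    (hv : ∀ m, v (m + 1) = B.mulVec (v m)) (hu : ∀ m, u (m + 1) = C.mulVec (u m))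
    (h : ∀ l ≤ n, v l = u l) : ∀ m, v m = u m := by
  set c : ℕ → ℤ := fun l => -(B.charpoly.coeff l) with hc
  have hB : B ^ n = ∑ l ∈ Finset.range n, c l • B ^ l := pow_eq_sum_of_charpoly B
  have hvk : ∀ m k, v (m + k) = (B ^ k).mulVec (v m) := by
    intro m k
    induction k with
    | zero => simp [Matrix.one_mulVec]
    | succ k ih => rw [← add_assoc, hv, ih, pow_succ', ← Matrix.mulVec_mulVec]
  have hrel : ∀ m, v (m + n) = ∑ l ∈ Finset.range n, c l • v (m + l) := by
    intro m
    rw [hvk m n, hB, sum_mulVec']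
    refine Finset.sum_congr rfl fun l _ => ?_
    rw [Matrix.smul_mulVec, hvk m l]
  intro m
  induction m using Nat.strong_induction_on with
  | _ m ih =>
    rcases le_or_gt m n with hm | hm
    · exact h m hm
    · obtain ⟨k, rfl⟩ : ∃ k, m = (k + 1) + n := ⟨m - n - 1, by omega⟩
      calc v (k + 1 + n)
          = ∑ l ∈ Finset.range n, c l • v (k + 1 + l) := hrel (k + 1)
        _ = ∑ l ∈ Finset.range n, c l • C.mulVec (u (k + l)) := by
            refine Finset.sum_congr rfl fun l hl => ?_
            have hl' := Finset.mem_range.mp hl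
            rw [ih (k + 1 + l) (by omega), show k + 1 + l = (k + l) + 1 by omega, hu]
        _ = C.mulVec (∑ l ∈ Finset.range n, c l • v (k + l)) := by
            rw [mulVec_sum']
            refine Finset.sum_congr rfl fun l hl => ?_
            have hl' := Finset.mem_range.mp hl
            rw [Matrix.mulVec_smul, ih (k + l) (by omega)]
        _ = C.mulVec (u (k + n)) := by rw [← hrel k, ih (k + n) (by omega)]
        _ = u (k + 1 + n) := by rw [show k + 1 + n = (k + n) + 1 by omega, hu]

lemma adj_cast {n : ℕ} (G : SimpleGraph (Fin n)) [DecidableRel G.Adj] (a b : Fin n) :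
    ((G.adjMatrix ℕ a b : ℕ) : ℤ) = G.adjMatrix ℤ a b := by
  by_cases h : G.Adj a b <;> simp [h]

/-- Only short walks matter: the infinite `𝔴`-labels of `i₁` in `G₁` and `i₂` in `G₂` are
permutation-equal iff their first `n+1` columns are.  The `l`-th column of `𝔴_G(i)` is
`A^l e_i`, i.e. its `j`-th entry is `(A^l) j i`, the number of walks of length `l`
from `i` to `j`. -/
theorem w_label_only_short_walks_matter (n : ℕ) (G₁ G₂ : SimpleGraph (Fin n))
    [DecidableRel G₁.Adj] [DecidableRel G₂.Adj] (i₁ i₂ : Fin n) :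
    (∃ σ : Equiv.Perm (Fin n), ∀ (l : ℕ) (j : Fin n),
        ((G₁.adjMatrix ℕ) ^ l) j i₁ = ((G₂.adjMatrix ℕ) ^ l) (σ j) i₂) ↔
      (∃ σ : Equiv.Perm (Fin n), ∀ l ≤ n, ∀ j : Fin n,
        ((G₁.adjMatrix ℕ) ^ l) j i₁ = ((G₂.adjMatrix ℕ) ^ l) (σ j) i₂) := by
  constructor
  · rintro ⟨σ, h⟩
    exact ⟨σ, fun l _ j => h l j⟩
  · rintro ⟨σ, h⟩
    refine ⟨σ, fun l j => ?_⟩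
    have key := krylov_agree (G₁.adjMatrix ℤ)
      (Matrix.of fun j k => G₂.adjMatrix ℤ (σ j) (σ k))
      (fun m j => (((G₁.adjMatrix ℕ) ^ m) j i₁ : ℤ))
      (fun m j => (((G₂.adjMatrix ℕ) ^ m) (σ j) i₂ : ℤ))
      (fun m => by
        ext j
        show ((((G₁.adjMatrix ℕ) ^ (m + 1)) j i₁ : ℕ) : ℤ) = _
        simp only [pow_succ', Matrix.mul_apply, Matrix.mulVec, dotProduct]
        push_cast
        exact Finset.sum_congr rfl fun k _ => by rw [adj_cast])
      (fun m => by
        ext j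
        show ((((G₂.adjMatrix ℕ) ^ (m + 1)) (σ j) i₂ : ℕ) : ℤ) = _
        simp only [pow_succ', Matrix.mul_apply, Matrix.mulVec, dotProduct,
          Matrix.of_apply]
        push_cast
        rw [show (∑ k, ((G₂.adjMatrix ℕ (σ j) k : ℤ)) * (((G₂.adjMatrix ℕ) ^ m) k i₂ : ℤ))
            = ∑ k, (G₂.adjMatrix ℤ (σ j) k) * (((G₂.adjMatrix ℕ) ^ m) k i₂ : ℤ) from
          Finset.sum_congr rfl fun k _ => by rw [adj_cast]]
        exact (Equiv.sum_comp σ fun k => (G₂.adjMatrix ℤ (σ j) k) *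
          ((((G₂.adjMatrix ℕ) ^ m) k i₂ : ℤ))).symm)
      (fun l hl => funext fun j =>
        show ((((G₁.adjMatrix ℕ) ^ l) j i₁ : ℕ) : ℤ)
            = ((((G₂.adjMatrix ℕ) ^ l) (σ j) i₂ : ℕ) : ℤ) by
          exact_mod_cast h l hl j)
      l
    have key' : ((((G₁.adjMatrix ℕ) ^ l) j i₁ : ℕ) : ℤ)
        = ((((G₂.adjMatrix ℕ) ^ l) (σ j) i₂ : ℕ) : ℤ) := congrFun key j
    exact_mod_cast key'
end

section
/- Let P be a permutation matrix and A₁, A₂ adjacency matrices of graphs on n nodes. If P·A₁^l e_{i₁} = A₂^l e_{i₂} holds for all 0 ≤ l ≤ n, then P·A₁^l e_{i₁} = A₂^l e_{i₂} holds for all l ≥ 0. -/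
/-- Cayley–Hamilton: `A^n` is a linear combination of the lower powers of `A`. -/
lemma cayley_pow (n : ℕ) (A : Matrix (Fin n) (Fin n) ℝ) :
    A ^ n = ∑ i ∈ Finset.range n, (-(A.charpoly.coeff i)) • A ^ i := by
  have hdeg : A.charpoly.natDegree = n := by
    rw [Matrix.charpoly_natDegree_eq_dim, Fintype.card_fin]
  have h0 := A.aeval_self_charpoly
  rw [Polynomial.aeval_eq_sum_range, hdeg, Finset.sum_range_succ] at h0
  have hc : A.charpoly.coeff n = 1 := by
    have := (A.charpoly_monic).coeff_natDegree
    rwa [hdeg] at this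
  rw [hc, one_smul] at h0
  have : A ^ n = -(∑ i ∈ Finset.range n, A.charpoly.coeff i • A ^ i) :=
    eq_neg_of_add_eq_zero_right h0
  rw [this, ← Finset.sum_neg_distrib]
  simp [neg_smul]

/-- If a permutation matrix (given by the permutation `σ`) maps `A₁^l e_{i₁}` to
`A₂^l e_{i₂}` for all `0 ≤ l ≤ n`, then it does so for all `l ≥ 0`. -/
theorem perm_eq_on_short_powers_propagates (n : ℕ) (G₁ G₂ : SimpleGraph (Fin n))
    [DecidableRel G₁.Adj] [DecidableRel G₂.Adj] (σ : Equiv.Perm (Fin n)) (i₁ i₂ : Fin n)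
    (h : ∀ l ≤ n, ∀ j : Fin n,
      ((G₁.adjMatrix ℝ) ^ l) (σ j) i₁ = ((G₂.adjMatrix ℝ) ^ l) j i₂) :
    ∀ (l : ℕ) (j : Fin n),
      ((G₁.adjMatrix ℝ) ^ l) (σ j) i₁ = ((G₂.adjMatrix ℝ) ^ l) j i₂ := by
  set A₁ := G₁.adjMatrix ℝ with hA₁
  set A₂ := G₂.adjMatrix ℝ with hA₂
  set c : ℕ → ℝ := fun i => -(A₁.charpoly.coeff i) with hc
  have hCH : A₁ ^ n = ∑ i ∈ Finset.range n, c i • A₁ ^ i := cayley_pow n A₁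
  -- column identity: the `i₂`-column of `A₂^n` satisfies the same linear relation
  have hcol : ∀ k : Fin n, (A₂ ^ n) k i₂ = ∑ i ∈ Finset.range n, c i * (A₂ ^ i) k i₂ := by
    intro k
    rw [← h n le_rfl k, hCH]
    simp only [Finset.sum_apply, Matrix.sum_apply, Matrix.smul_apply, smul_eq_mul]
    exact Finset.sum_congr rfl fun i hi => by
      rw [h i (le_of_lt (Finset.mem_range.mp hi)) k]
  intro l
  induction l using Nat.strong_induction_on with
  | _ l ih =>
    intro j
    rcases le_or_gt l n with hl | hl
    · exact h l hl j
    · obtain ⟨t, rfl⟩ : ∃ t, l = t + n := ⟨l - n, by omega⟩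
      have hlhs : (A₁ ^ (t + n)) (σ j) i₁
          = ∑ i ∈ Finset.range n, c i * (A₁ ^ (t + i)) (σ j) i₁ := by
        rw [pow_add, hCH, Finset.mul_sum]
        simp only [Finset.sum_apply, Matrix.sum_apply, Matrix.smul_apply, smul_eq_mul,
          Matrix.mul_smul, ← pow_add]
      have hrhs : (A₂ ^ (t + n)) j i₂
          = ∑ i ∈ Finset.range n, c i * (A₂ ^ (t + i)) j i₂ := by
        rw [pow_add, Matrix.mul_apply]
        calc ∑ k, (A₂ ^ t) j k * (A₂ ^ n) k i₂
            = ∑ k, ∑ i ∈ Finset.range n, c i * ((A₂ ^ t) j k * (A₂ ^ i) k i₂) := by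
              refine Finset.sum_congr rfl fun k _ => ?_
              rw [hcol k, Finset.mul_sum]
              refine Finset.sum_congr rfl fun i _ => by ring
          _ = ∑ i ∈ Finset.range n, c i * (A₂ ^ (t + i)) j i₂ := by
              rw [Finset.sum_comm]
              refine Finset.sum_congr rfl fun i _ => ?_
              rw [← Finset.mul_sum, pow_add, Matrix.mul_apply]
      rw [hlhs, hrhs]
      refine Finset.sum_congr rfl fun i hi => ?_
      rw [ih (t + i) (by have := Finset.mem_range.mp hi; omega) j]
end

section
/- If two graphs G₁ and G₂ on n nodes are 𝔴-equivalent, then their adjacency matrices A₁ and A₂ have the same spectrum (same eigenvalues with the same multiplicities). -/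
/-!
Comparing the `i`-th columns of `A₁ ^ 0 = 1` and `A₂ ^ 0 = 1` forces the permutation `σ` of node
`i` to send `i` to `π i`, so `π` matches the diagonals of all powers and `tr (A₁ ^ l) = tr (A₂ ^ l)`
for every `l`. For symmetric matrices these traces are the power sums of the eigenvalues, and in
characteristic zero Newton's identities recover the elementary symmetric functions of the
eigenvalues, i.e. the coefficients of the characteristic polynomial, from the power sums.
-/

open Matrix Polynomial Finset

section NewtonIdentities

variable {σ R : Type*} [Fintype σ] [CommRing R] [IsDomain R] [CharZero R]

theorem Multiset.esymm_map_univ_eq_of_sum_pow_eq {f g : σ → R}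
    (h : ∀ k, 0 < k → ∑ i, f i ^ k = ∑ i, g i ^ k) (k : ℕ) :
    (univ.val.map f).esymm k = (univ.val.map g).esymm k := by
  simp only [← MvPolynomial.aeval_esymm_eq_multiset_esymm σ R]
  induction k using Nat.strong_induction_on with
  | _ k ih =>
    rcases Nat.eq_zero_or_pos k with rfl | hk
    · simp [MvPolynomial.esymm_zero]
    have hpsum (φ : σ → R) (m : ℕ) :
        MvPolynomial.aeval φ (MvPolynomial.psum σ R m) = ∑ i, φ i ^ m := by
      simp [MvPolynomial.psum]
    have hnewton : MvPolynomial.aeval f ((k : MvPolynomial σ R) * MvPolynomial.esymm σ R k) =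
        MvPolynomial.aeval g ((k : MvPolynomial σ R) * MvPolynomial.esymm σ R k) := by
      simp only [MvPolynomial.mul_esymm_eq_sum, map_mul, map_sum, map_pow, map_neg, map_one,
        hpsum]
      congr 1
      refine sum_congr rfl fun a ha => ?_
      obtain ⟨hsum, hlt⟩ : a.1 + a.2 = k ∧ a.1 < k := by simpa using ha
      rw [ih a.1 hlt, h a.2 (by omega)]
    simpa [hk.ne'] using hnewton

theorem prod_X_sub_C_eq_of_sum_pow_eq {f g : σ → R}
    (h : ∀ k, 0 < k → ∑ i, f i ^ k = ∑ i, g i ^ k) :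
    ∏ i, (X - C (f i)) = ∏ i, (X - C (g i)) := by
  have hvieta (φ : σ → R) : ∏ i, (X - C (φ i)) =
      ∑ j ∈ range (Fintype.card σ + 1),
        (-1) ^ j * (C ((univ.val.map φ).esymm j) * X ^ (Fintype.card σ - j)) := by
    simpa [Multiset.map_map] using Multiset.prod_X_sub_X_eq_sum_esymm (univ.val.map φ)
  simp only [hvieta, Multiset.esymm_map_univ_eq_of_sum_pow_eq h]

end NewtonIdentities

namespace Matrix.IsHermitian

variable {𝕜 ι : Type*} [RCLike 𝕜] [Fintype ι] [DecidableEq ι] {A B : Matrix ι ι 𝕜}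

theorem trace_pow_eq_sum_eigenvalues_pow (hA : A.IsHermitian) (l : ℕ) :
    (A ^ l).trace = ∑ i, (hA.eigenvalues i : 𝕜) ^ l := by
  conv_lhs => rw [hA.spectral_theorem, ← map_pow, Unitary.conjStarAlgAut_apply, trace_mul_cycle,
    Unitary.coe_star_mul_self, one_mul, diagonal_pow, trace_diagonal]
  rfl

theorem charpoly_eq_of_trace_pow_eq (hA : A.IsHermitian) (hB : B.IsHermitian)
    (h : ∀ l, (A ^ l).trace = (B ^ l).trace) : A.charpoly = B.charpoly := by
  rw [hA.charpoly_eq, hB.charpoly_eq]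
  refine prod_X_sub_C_eq_of_sum_pow_eq fun k _ => ?_
  rw [← hA.trace_pow_eq_sum_eigenvalues_pow, ← hB.trace_pow_eq_sum_eigenvalues_pow, h]

end Matrix.IsHermitian

namespace Matrix

variable {ι R : Type*} [Fintype ι] [DecidableEq ι] [Semiring R]

/-- `𝔴`-equivalence, with the permutation matrix `P` of node `i` written as a permutation `σ`
of the rows. -/
def IsWEquivalent (A B : Matrix ι ι R) : Prop :=
  ∃ π : Equiv.Perm ι, ∀ i, ∃ σ : Equiv.Perm ι, ∀ (l : ℕ) (j : ι), (A ^ l) j i = (B ^ l) (σ j) (π i)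

variable [Nontrivial R] {A B : Matrix ι ι R}

theorem IsWEquivalent.exists_pow_apply_self_eq (h : A.IsWEquivalent B) :
    ∃ π : Equiv.Perm ι, ∀ (l : ℕ) (i : ι), (A ^ l) i i = (B ^ l) (π i) (π i) := by
  obtain ⟨π, hπ⟩ := h
  refine ⟨π, fun l i => ?_⟩
  obtain ⟨σ, hσ⟩ := hπ i
  have hσi : σ i = π i := by
    by_contra hne
    simpa [one_apply_ne hne] using hσ 0 i
  rw [hσ l i, hσi]

theorem IsWEquivalent.trace_pow_eq (h : A.IsWEquivalent B) (l : ℕ) :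
    (A ^ l).trace = (B ^ l).trace := by
  obtain ⟨π, hπ⟩ := h.exists_pow_apply_self_eq
  simp only [trace, diag, hπ l]
  exact Equiv.sum_comp π fun i => (B ^ l) i i

end Matrix

/-- If `G₁` and `G₂` are `𝔴`-equivalent, then they are cospectral (their adjacency
matrices have the same characteristic polynomial, hence the same eigenvalues with
multiplicities). -/
theorem w_equiv_implies_cospectral (n : ℕ) (G₁ G₂ : SimpleGraph (Fin n))
    [DecidableRel G₁.Adj] [DecidableRel G₂.Adj]
    (h : ∃ π : Equiv.Perm (Fin n), ∀ i : Fin n, ∃ σ : Equiv.Perm (Fin n),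
      ∀ (l : ℕ) (j : Fin n),
        ((G₁.adjMatrix ℝ) ^ l) j i = ((G₂.adjMatrix ℝ) ^ l) (σ j) (π i)) :
    (G₁.adjMatrix ℝ).charpoly = (G₂.adjMatrix ℝ).charpoly := by
  exact (G₁.isHermitian_adjMatrix ℝ).charpoly_eq_of_trace_pow_eq (G₂.isHermitian_adjMatrix ℝ)
    (IsWEquivalent.trace_pow_eq h)
end

section
/- Let G₁ and G₂ be cospectral graphs with all eigenvalues simple, with eigenmatrices U and V respectively. Suppose some row i* of U has all entries nonzero. If G₁ and G₂ are 𝔴-equivalent, then G₁ and G₂ are isomorphic: there exists a permutation matrix Π and a diagonal sign matrix S (entries ±1) with ΠU = VS, and hence ΠA₁Πᵀ = A₂. -/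
open Matrix in
private lemma spec_entry {n : ℕ} (W : Matrix (Fin n) (Fin n) ℝ) (f : Fin n → ℝ)
    (i j : Fin n) : (W * Matrix.diagonal f * Wᵀ) j i = ∑ k, W j k * f k * W i k := by
  simp [Matrix.mul_apply, Matrix.diagonal_apply, mul_ite, mul_zero, Finset.sum_ite_eq, Finset.sum_ite_eq']

open Matrix in
private lemma spec_pow {n : ℕ} (W A : Matrix (Fin n) (Fin n) ℝ) (lam : Fin n → ℝ)
    (hW : Wᵀ * W = 1) (hA : A = W * Matrix.diagonal lam * Wᵀ) (l : ℕ) :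
    A ^ l = W * Matrix.diagonal (fun k => lam k ^ l) * Wᵀ := by
  have hW' : W * Wᵀ = 1 := by
    rw [mul_eq_one_comm] at hW; exact hW
  induction l with
  | zero => simp [hW']
  | succ m ih =>
    rw [pow_succ, ih, hA]
    have : (W * Matrix.diagonal (fun k => lam k ^ m) * Wᵀ) * (W * Matrix.diagonal lam * Wᵀ)
        = W * ((Matrix.diagonal (fun k => lam k ^ m) * (Wᵀ * W)) * Matrix.diagonal lam) * Wᵀ := by
      simp only [Matrix.mul_assoc]
    rw [this, hW, Matrix.mul_one, Matrix.diagonal_mul_diagonal]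
    simp [pow_succ]

open Matrix in
/-- Cospectral graphs with simple eigenvalues whose eigenmatrix has a row of nonzero
entries: if they are `𝔴`-equivalent then they are isomorphic, witnessed by a permutation
`Π` (given by `σ`) and a sign matrix `S` with `ΠU = VS` and `ΠA₁Πᵀ = A₂`. -/
theorem w_equiv_implies_iso_of_nonzero_row (n : ℕ) (G₁ G₂ : SimpleGraph (Fin n))
    [DecidableRel G₁.Adj] [DecidableRel G₂.Adj]
    (A₁ A₂ U V : Matrix (Fin n) (Fin n) ℝ) (lam : Fin n → ℝ)
    (hA₁def : A₁ = G₁.adjMatrix ℝ) (hA₂def : A₂ = G₂.adjMatrix ℝ)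
    (hU : Uᵀ * U = 1) (hV : Vᵀ * V = 1)
    (hA₁ : A₁ = U * Matrix.diagonal lam * Uᵀ)
    (hA₂ : A₂ = V * Matrix.diagonal lam * Vᵀ)
    (hlam : Function.Injective lam)
    (istar : Fin n) (hrow : ∀ k, U istar k ≠ 0)
    (hw : ∃ π : Equiv.Perm (Fin n), ∀ i : Fin n, ∃ σ : Equiv.Perm (Fin n),
      ∀ (l : ℕ) (j : Fin n), (A₁ ^ l) j i = (A₂ ^ l) (σ j) (π i)) :
    ∃ (σ : Equiv.Perm (Fin n)) (s : Fin n → ℝ),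
      (∀ k, s k = 1 ∨ s k = -1) ∧
      (∀ j k, U (σ j) k = V j k * s k) ∧
      (∀ i j, A₁ (σ i) (σ j) = A₂ i j) := by
  obtain ⟨π, hπ⟩ := hw
  obtain ⟨σ₀, hσ₀⟩ := hπ istar
  -- Key pointwise identity from the Vandermonde argument
  have key : ∀ j k, U j k * U istar k = V (σ₀ j) k * V (π istar) k := by
    intro j k
    set c : Fin n → ℝ := fun k => U j k * U istar k - V (σ₀ j) k * V (π istar) k with hc
    have hzero : ∀ l : ℕ, ∑ k, c k * lam k ^ l = 0 := by
      intro l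
      have h1 := hσ₀ l j
      rw [spec_pow U A₁ lam hU hA₁ l, spec_pow V A₂ lam hV hA₂ l,
        spec_entry, spec_entry] at h1
      have : ∑ k, c k * lam k ^ l
          = (∑ k, U j k * lam k ^ l * U istar k)
            - ∑ k, V (σ₀ j) k * lam k ^ l * V (π istar) k := by
        rw [← Finset.sum_sub_distrib]
        apply Finset.sum_congr rfl
        intro k _; simp only [hc]; ring
      rw [this, h1, sub_self]
    have : c = 0 := by
      apply Matrix.eq_zero_of_forall_pow_sum_mul_pow_eq_zero hlam
      intro i; exact hzero i
    have hck : c k = 0 := by rw [this]; rfl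
    simpa [hc, sub_eq_zero] using hck
  -- column norms
  have normU : ∀ k, ∑ j, U j k * U j k = 1 := by
    intro k
    have := congrFun (congrFun hU k) k
    simpa [Matrix.mul_apply, Matrix.one_apply] using this
  have normV : ∀ k, ∑ j, V j k * V j k = 1 := by
    intro k
    have := congrFun (congrFun hV k) k
    simpa [Matrix.mul_apply, Matrix.one_apply] using this
  -- squares of the special rows agree
  have hsq : ∀ k, U istar k * U istar k = V (π istar) k * V (π istar) k := by
    intro k
    have h1 : ∑ j, (U j k * U istar k) * (U j k * U istar k)
        = ∑ j, (V (σ₀ j) k * V (π istar) k) * (V (σ₀ j) k * V (π istar) k) := by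
      apply Finset.sum_congr rfl; intro j _; rw [key j k]
    have h2 : ∑ j, (U j k * U istar k) * (U j k * U istar k)
        = (U istar k * U istar k) * ∑ j, U j k * U j k := by
      rw [Finset.mul_sum]; apply Finset.sum_congr rfl; intro j _; ring
    have h3 : ∑ j, (V (σ₀ j) k * V (π istar) k) * (V (σ₀ j) k * V (π istar) k)
        = (V (π istar) k * V (π istar) k) * ∑ j, V j k * V j k := by
      rw [Finset.mul_sum, ← Equiv.sum_comp σ₀ (fun m => (V (π istar) k * V (π istar) k) * (V m k * V m k))]
      apply Finset.sum_congr rfl; intro j _; ring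
    have := h1
    rw [h2, h3, normU, normV, mul_one, mul_one] at this
    exact this
  have hVne : ∀ k, V (π istar) k ≠ 0 := by
    intro k hk
    have := hsq k
    rw [hk, mul_zero] at this
    exact hrow k (by
      have := mul_self_eq_zero.mp this
      exact this)
  set s : Fin n → ℝ := fun k => V (π istar) k / U istar k with hs
  have hsmul : ∀ k, s k * U istar k = V (π istar) k := fun k =>
    div_mul_cancel₀ _ (hrow k)
  have hs1 : ∀ k, s k * s k = 1 := by
    intro k
    have : (s k * U istar k) * (s k * U istar k) = V (π istar) k * V (π istar) k := by
      rw [hsmul]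
    rw [← hsq k] at this
    have h4 : (s k * s k) * (U istar k * U istar k) = 1 * (U istar k * U istar k) := by
      rw [one_mul]; nlinarith [this]
    exact mul_right_cancel₀ (mul_ne_zero (hrow k) (hrow k)) h4
  have hspm : ∀ k, s k = 1 ∨ s k = -1 := fun k => mul_self_eq_one_iff.mp (hs1 k)
  -- U j k = V (σ₀ j) k * s k
  have hUV : ∀ j k, U j k = V (σ₀ j) k * s k := by
    intro j k
    have h := key j k
    rw [← hsmul k] at h
    have h' : U j k * U istar k = (V (σ₀ j) k * s k) * U istar k := by
      rw [h]; ring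
    exact mul_right_cancel₀ (hrow k) h'
  refine ⟨σ₀.symm, s, hspm, ?_, ?_⟩
  · intro j k
    have := hUV (σ₀.symm j) k
    rwa [Equiv.apply_symm_apply] at this
  · intro i j
    rw [hA₁, hA₂, spec_entry, spec_entry]
    apply Finset.sum_congr rfl
    intro k _
    rw [hUV (σ₀.symm i) k, hUV (σ₀.symm j) k, Equiv.apply_symm_apply, Equiv.apply_symm_apply]
    linear_combination (V i k * V j k * lam k) * hs1 k
end

section
/- Let G₁ and G₂ be 𝔴-equivalent graphs with the equivalence realized by the identity (𝔴_{G₁}(i) permutation-equal to 𝔴_{G₂}(i) for all i). Then for any simple eigenvalue λ_k of the common spectrum, the corresponding unit eigenvectors u_k of A₁ and v_k of A₂ satisfy |u_{ki}| = |v_{ki}| for every node i. -/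
/-!
For a real symmetric matrix `A` and an eigenvalue `μ`, a polynomial `p` with `p μ = 1` that
vanishes on the rest of the spectrum turns `A` into the orthogonal projection `p(A)` onto the
`μ`-eigenspace. When that eigenspace is spanned by a unit vector `u`, this projection is `u uᵀ`,
so `p(A)ᵢᵢ = uᵢ²`. Choosing one `p` for the union of both spectra, the diagonal entries of
`p(A₁)` and `p(A₂)` agree because those of all powers do, hence `uᵢ² = vᵢ²`.
-/

open Polynomial Module

theorem Module.End.exists_eq_smul_of_finrank_eigenspace_eq_one {K V : Type*} [Field K]
    [AddCommGroup V] [Module K V] {f : End K V} {μ : K} {u w : V}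
    (hf : finrank K (f.eigenspace μ) = 1) (hu : u ∈ f.eigenspace μ) (hu₀ : u ≠ 0)
    (hw : w ∈ f.eigenspace μ) : ∃ c : K, w = c • u := by
  obtain ⟨c, hc⟩ := (finrank_eq_one_iff_of_nonzero' ⟨u, hu⟩ (by simpa using hu₀)).mp hf ⟨w, hw⟩
  exact ⟨c, congrArg Subtype.val hc.symm⟩

namespace Matrix

variable {ι : Type*} [Fintype ι]

theorem aeval_apply_eq_of_pow_apply_eq {R : Type*} [CommSemiring R] [DecidableEq ι]
    {A B : Matrix ι ι R} {i j : ι} (h : ∀ l : ℕ, (A ^ l) i j = (B ^ l) i j) (p : R[X]) :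
    aeval A p i j = aeval B p i j := by
  simp only [aeval_eq_sum_range, sum_apply, smul_apply, h]

theorem aeval_mulVec_of_mulVec_eq_smul {R : Type*} [CommRing R] [DecidableEq ι]
    {A : Matrix ι ι R} {μ : R} {u : ι → R} (hu : A *ᵥ u = μ • u) (p : R[X]) :
    aeval A p *ᵥ u = p.eval μ • u := by
  have h := Module.End.aeval_apply_of_mem_apply_eq_smul (p := p) (f := toLinAlgEquiv' A) (x := u)
    (by simpa [toLinAlgEquiv'_apply] using hu)
  rwa [aeval_algHom_apply, toLinAlgEquiv'_apply] at h

namespace IsHermitian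

variable {𝕜 : Type*} [RCLike 𝕜] [DecidableEq ι] {A : Matrix ι ι 𝕜}

theorem aeval_eq_zero_of_eval_eigenvalues_eq_zero (hA : A.IsHermitian) {q : ℝ[X]}
    (hq : ∀ k, q.eval (hA.eigenvalues k) = 0) : aeval A q = 0 := by
  rw [← cfc_polynomial q A, ← cfc_zero ℝ A]
  refine cfc_congr ?_
  rw [hA.spectrum_real_eq_range_eigenvalues]
  rintro _ ⟨k, rfl⟩
  exact hq k

theorem mul_aeval_eq_smul_aeval (hA : A.IsHermitian) {μ : ℝ} {p : ℝ[X]}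
    (hp : ∀ k, hA.eigenvalues k ≠ μ → p.eval (hA.eigenvalues k) = 0) :
    A * aeval A p = μ • aeval A p := by
  have := hA.aeval_eq_zero_of_eval_eigenvalues_eq_zero (q := (X - C μ) * p) fun k => by
    by_cases hk : hA.eigenvalues k = μ <;> simp [hk, hp]
  simpa [sub_mul, sub_eq_zero, Algebra.algebraMap_eq_smul_one] using this

protected theorem aeval (hA : A.IsHermitian) (p : ℝ[X]) : (aeval A p).IsHermitian := by
  rw [← cfc_polynomial p A]
  exact cfc_predicate _ A

end IsHermitian

theorem pow_apply_self_eq_of_pow_apply_eq_perm {R : Type*} [Semiring R] [Nontrivial R]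
    [DecidableEq ι] {A B : Matrix ι ι R} {i : ι} {σ : Equiv.Perm ι}
    (h : ∀ (l : ℕ) (j : ι), (A ^ l) j i = (B ^ l) (σ j) i) (l : ℕ) :
    (A ^ l) i i = (B ^ l) i i := by
  have hσ : σ i = i := by
    by_contra hne
    simpa [one_apply, hne] using h 0 i
  simpa [hσ] using h l i

theorem apply_self_eq_sq_of_mul_eq_smul {A M : Matrix ι ι ℝ} {μ : ℝ} {u : ι → ℝ} [DecidableEq ι]
    (hsimple : finrank ℝ (End.eigenspace (toLin' A) μ) = 1) (hu : A *ᵥ u = μ • u)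
    (hun : ∑ j, u j ^ 2 = 1) (hAM : A * M = μ • M) (hM : M.IsSymm) (hMu : M *ᵥ u = u) (i : ι) :
    M i i = u i ^ 2 := by
  have hu₀ : u ≠ 0 := by rintro rfl; simp at hun
  have hcol : A *ᵥ M.col i = μ • M.col i := by
    rw [← mulVec_single_one, mulVec_mulVec, hAM, smul_mulVec]
  obtain ⟨c, hc⟩ := End.exists_eq_smul_of_finrank_eigenspace_eq_one hsimple
    (by simpa using hu) hu₀ (w := M.col i) (by simpa using hcol)
  have hMc : ∀ j, M j i = c * u j := fun j => congrFun hc j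
  have hcu : c = u i := calc
    c = ∑ j, M j i * u j := by simp only [hMc, mul_assoc, ← sq, ← Finset.mul_sum, hun, mul_one]
    _ = (M *ᵥ u) i := by simp only [mulVec, dotProduct, hM.apply]
    _ = u i := by rw [hMu]
  rw [hMc, hcu, sq]

theorem IsHermitian.aeval_apply_self_eq_sq [DecidableEq ι] {A : Matrix ι ι ℝ} (hA : A.IsHermitian)
    {μ : ℝ} {u : ι → ℝ} {p : ℝ[X]} (hsimple : finrank ℝ (End.eigenspace (toLin' A) μ) = 1)
    (hu : A *ᵥ u = μ • u) (hun : ∑ j, u j ^ 2 = 1) (hpμ : p.eval μ = 1)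
    (hp : ∀ k, hA.eigenvalues k ≠ μ → p.eval (hA.eigenvalues k) = 0) (i : ι) :
    aeval A p i i = u i ^ 2 :=
  apply_self_eq_sq_of_mul_eq_smul hsimple hu hun (hA.mul_aeval_eq_smul_aeval hp)
    (isHermitian_iff_isSymm.mp (hA.aeval p))
    (by rw [aeval_mulVec_of_mulVec_eq_smul hu, hpμ, one_smul]) i

end Matrix

open Finset Matrix in
/-- If `G₁` and `G₂` are `𝔴`-equivalent via the identity relabeling, then for any simple
eigenvalue `μ` (of both), corresponding unit eigenvectors `u` of `A₁` and `v` of `A₂`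
agree in absolute value entrywise: `|u i| = |v i|` for every node `i`. -/
theorem w_equiv_simple_eigenvector_abs_eq (n : ℕ) (G₁ G₂ : SimpleGraph (Fin n))
    [DecidableRel G₁.Adj] [DecidableRel G₂.Adj]
    (hw : ∀ i : Fin n, ∃ σ : Equiv.Perm (Fin n), ∀ (l : ℕ) (j : Fin n),
      ((G₁.adjMatrix ℝ) ^ l) j i = ((G₂.adjMatrix ℝ) ^ l) (σ j) i)
    (μ : ℝ) (u v : Fin n → ℝ)
    (hu : (G₁.adjMatrix ℝ).mulVec u = μ • u)
    (hv : (G₂.adjMatrix ℝ).mulVec v = μ • v)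
    (hun : ∑ i, u i ^ 2 = 1) (hvn : ∑ i, v i ^ 2 = 1)
    (hsimple₁ : Module.finrank ℝ
      (Module.End.eigenspace (Matrix.toLin' (G₁.adjMatrix ℝ)) μ) = 1)
    (hsimple₂ : Module.finrank ℝ
      (Module.End.eigenspace (Matrix.toLin' (G₂.adjMatrix ℝ)) μ) = 1) :
    ∀ i, |u i| = |v i| := by
  intro i
  obtain ⟨σ, hσ⟩ := hw i
  have hA₁ : (G₁.adjMatrix ℝ).IsHermitian := isHermitian_iff_isSymm.mpr G₁.isSymm_adjMatrix
  have hA₂ : (G₂.adjMatrix ℝ).IsHermitian := isHermitian_iff_isSymm.mpr G₂.isSymm_adjMatrix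
  set s := insert μ (univ.image hA₁.eigenvalues ∪ univ.image hA₂.eigenvalues)
  set p := Lagrange.basis s id μ
  have hpμ : p.eval μ = 1 := Lagrange.eval_basis_self (Set.injOn_id _) (mem_insert_self μ _)
  have hp : ∀ x ∈ s, x ≠ μ → p.eval x = 0 := fun x hx hxμ =>
    Lagrange.eval_basis_of_ne (v := id) hxμ.symm hx
  rw [← sq_eq_sq_iff_abs_eq_abs,
    ← hA₁.aeval_apply_self_eq_sq hsimple₁ hu hun hpμ fun k => hp _ (by simp [s]),
    ← hA₂.aeval_apply_self_eq_sq hsimple₂ hv hvn hpμ fun k => hp _ (by simp [s]),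
    aeval_apply_eq_of_pow_apply_eq (pow_apply_self_eq_of_pow_apply_eq_perm hσ)]
end

section
/- Two finite trees are isomorphic if and only if they are 𝔰¹-equivalent, i.e., their multisets {𝔰¹_G(v) : v ∈ V} of node labels coincide, where 𝔰¹ is the perfect-aggregation (color-refinement with a distinguished root) labeling. -/
/-- Hereditarily structured labels of refinement depth `l`. -/
def LblT : ℕ → Type
  | 0 => ℕ
  | l + 1 => LblT l × Multiset (LblT l)

variable {V : Type} [Fintype V] [DecidableEq V]

/-- The perfect-aggregation (`𝔰`) label of node `i` at refinement level `l`, starting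
from the base coloring `c`:  level `0` is the base color, and level `l+1` pairs the
previous label with the multiset of previous labels of the neighbors. -/
def sLabel (G : SimpleGraph V) [DecidableRel G.Adj] (c : V → ℕ) :
    (l : ℕ) → V → LblT l
  | 0, i => c i
  | l + 1, i =>
      ((sLabel G c l i, (G.neighborFinset i).val.map (sLabel G c l)) :
        LblT l × Multiset (LblT l))

/-- The base coloring `i ↦ Σ_q q·δ_{i,i_q}` determined by the list of distinguished
nodes `pref = [i₁, …, i_q]` (1-indexed, as in the paper). -/
def baseColor (pref : List V) (i : V) : ℕ :=
  ((List.range pref.length).map fun q => if pref[q]? = some i then q + 1 else 0).sum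

/-- The row of node `i` in the label matrix: its labels at all levels. -/
def sRow (G : SimpleGraph V) [DecidableRel G.Adj] (c : V → ℕ) (i : V) :
    (l : ℕ) → LblT l :=
  fun l => sLabel G c l i

/-- Type of `r`-fold aggregated labels: at depth `0`, a label matrix regarded as the
multiset of its rows; each aggregation step forms a multiset. -/
def AggT : ℕ → Type
  | 0 => Multiset ((l : ℕ) → LblT l)
  | r + 1 => Multiset (AggT r)

/-- The aggregated label `𝔰ᵏ_G(i₁,…,i_q)` where `pref = [i₁,…,i_q]` and `r` further
distinguished nodes remain to be chosen (`r = k - q`). -/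
def sAgg (G : SimpleGraph V) [DecidableRel G.Adj] : (r : ℕ) → List V → AggT r
  | 0, pref => Finset.univ.val.map (fun i => sRow G (baseColor pref) i)
  | r + 1, pref =>
      ((Finset.univ.filter (fun i => i ∉ pref)).val.map
        (fun i => sAgg G r (pref ++ [i])))

/-- The `𝔰ᵏ` fingerprint of the graph `G`. -/
def sFingerprint (G : SimpleGraph V) [DecidableRel G.Adj] (k : ℕ) : AggT k :=
  sAgg G k []

/-!
An isomorphism transports every label, so the `𝔰ᵏ` fingerprints are isomorphism invariants.

Conversely, if the `𝔰¹` fingerprints agree, some root `r₁` has the same row in its label matrix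
as some `r₂` in its own: colour `1` at level `0` singles out the row of the root. Once the root
`r` is marked, the level-`l` label of `v` records whether `dist r v ≤ l`, so equal rows have equal
depth; and equal rows give, level by level, equal multisets of neighbour labels. As there are only
finitely many maps between the vertex sets, one matching of the neighbours works at infinitely
many levels, hence at all of them, and by depth it matches children with children. Extending
such matchings from the roots downwards yields an isomorphism of the trees.
-/

namespace SimpleGraph

section RootedTree

variable {V : Type*} {G : SimpleGraph V} {r v w : V}

lemma Connected.exists_adj_dist_add_one_eq (hG : G.Connected) (hv : v ≠ r) :
    ∃ w, G.Adj w v ∧ G.dist r w + 1 = G.dist r v := by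
  obtain ⟨p, hp⟩ := hG.exists_walk_length_eq_dist r v
  have hp_nil : ¬p.Nil := Walk.not_nil_of_ne hv.symm
  have hadj := p.adj_penultimate hp_nil
  refine ⟨p.penultimate, hadj, ?_⟩
  have h_le : G.dist r p.penultimate ≤ p.length - 1 := p.length_dropLast ▸ G.dist_le _
  have h_tri : G.dist r v ≤ G.dist r p.penultimate + G.dist p.penultimate v := hG.dist_triangle
  rw [dist_eq_one_iff_adj.mpr hadj] at h_tri
  have := p.length_dropLast_add_one hp_nil
  omega

lemma Connected.dist_le_add_one_iff (hG : G.Connected) {l : ℕ} :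
    G.dist r v ≤ l + 1 ↔ G.dist r v ≤ l ∨ ∃ w, G.Adj v w ∧ G.dist r w ≤ l := by
  constructor
  · intro h
    by_cases hv : v = r
    · simp [hv]
    obtain ⟨w, hadj, hd⟩ := hG.exists_adj_dist_add_one_eq hv
    exact .inr ⟨w, hadj.symm, by omega⟩
  · rintro (h | ⟨w, hadj, hd⟩)
    · omega
    · have h_tri : G.dist r v ≤ G.dist r w + G.dist w v := hG.dist_triangle
      rw [dist_eq_one_iff_adj.mpr hadj.symm] at h_tri
      omega

lemma IsTree.eq_of_adj_of_dist_add_one_eq (hG : G.IsTree) {w' : V} (hw : G.Adj w v)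
    (hw' : G.Adj w' v) (hd : G.dist r w + 1 = G.dist r v) (hd' : G.dist r w' + 1 = G.dist r v) :
    w = w' := by
  -- a shortest path to `w`, extended by the edge `wv`, is the unique path to `v`
  have shortest_concat : ∀ {u} (h : G.Adj u v), G.dist r u + 1 = G.dist r v →
      ∃ p : G.Walk r v, p.IsPath ∧ p.penultimate = u := fun h hd => by
    obtain ⟨q, hq⟩ := hG.connected.exists_walk_length_eq_dist r _
    exact ⟨q.concat h, (q.concat h).isPath_of_length_eq_dist (by simp [hq, hd]),
      q.penultimate_concat h⟩
  obtain ⟨p, hp, rfl⟩ := shortest_concat hw hd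
  obtain ⟨p', hp', rfl⟩ := shortest_concat hw' hd'
  obtain rfl : p = p' :=
    congrArg Subtype.val ((hG.isAcyclic.subsingleton_path r v).elim ⟨p, hp⟩ ⟨p', hp'⟩)
  rfl

open Classical in
/-- The neighbour of `v` on a shortest path from `r` (unique in a tree); `v` itself if `v = r`. -/
noncomputable def parent (G : SimpleGraph V) (r v : V) : V :=
  if h : ∃ w, G.Adj w v ∧ G.dist r w + 1 = G.dist r v then h.choose else v

def children (G : SimpleGraph V) (r v : V) : Set V :=
  G.neighborSet v ∩ {w | G.dist r w = G.dist r v + 1}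

lemma Connected.parent_spec (hG : G.Connected) (hv : v ≠ r) :
    G.Adj (G.parent r v) v ∧ G.dist r (G.parent r v) + 1 = G.dist r v := by
  have h := hG.exists_adj_dist_add_one_eq hv
  classical
  rw [parent, dif_pos h]
  exact h.choose_spec

lemma IsTree.parent_eq (hG : G.IsTree) (hw : G.Adj w v) (hd : G.dist r w + 1 = G.dist r v) :
    G.parent r v = w := by
  have hv : v ≠ r := by rintro rfl; simp at hd
  have hspec := hG.connected.parent_spec hv
  exact hG.eq_of_adj_of_dist_add_one_eq hspec.1 hw hspec.2 hd

lemma IsTree.mem_children_iff (hG : G.IsTree) :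
    w ∈ G.children r v ↔ w ≠ r ∧ G.parent r w = v := by
  constructor
  · rintro ⟨hadj, hd⟩
    refine ⟨?_, hG.parent_eq hadj hd.symm⟩
    rintro rfl
    simp at hd
  · rintro ⟨hw, rfl⟩
    have hspec := hG.connected.parent_spec hw
    exact ⟨hspec.1, hspec.2.symm⟩

lemma IsTree.adj_iff_mem_children (hG : G.IsTree) :
    G.Adj v w ↔ w ∈ G.children r v ∨ v ∈ G.children r w := by
  constructor
  · intro hadj
    rcases hG.dist_eq_dist_add_one_of_adj r hadj with hd | hd
    · exact .inr ⟨hadj.symm, hd⟩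
    · exact .inl ⟨hadj, hd⟩
  · rintro (⟨hadj, -⟩ | ⟨hadj, -⟩)
    · exact hadj
    · exact hadj.symm

end RootedTree

section RootedIso

variable {V₁ V₂ : Type*} {G₁ : SimpleGraph V₁} {G₂ : SimpleGraph V₂} {r₁ : V₁} {r₂ : V₂}
  {f : V₁ → V₂}

lemma IsTree.map_parent_of_bijOn_children (hT₁ : G₁.IsTree) (hT₂ : G₂.IsTree)
    (hf : ∀ v, Set.BijOn f (G₁.children r₁ v) (G₂.children r₂ (f v))) {v : V₁} (hv : v ≠ r₁) :
    f v ≠ r₂ ∧ G₂.parent r₂ (f v) = f (G₁.parent r₁ v) :=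
  hT₂.mem_children_iff.mp ((hf _).mapsTo (hT₁.mem_children_iff.mpr ⟨hv, rfl⟩))

lemma IsTree.injective_of_bijOn_children (hT₁ : G₁.IsTree) (hT₂ : G₂.IsTree)
    (hroot : f r₁ = r₂) (hf : ∀ v, Set.BijOn f (G₁.children r₁ v) (G₂.children r₂ (f v))) :
    f.Injective := by
  have hmap {v} (hv : v ≠ r₁) := hT₁.map_parent_of_bijOn_children hT₂ hf hv
  have eq_root : ∀ {v w}, f v = f w → v = r₁ → w = r₁ := fun hvw hv => by
    by_contra hw
    exact (hmap hw).1 (hvw ▸ hv ▸ hroot)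
  intro v w hvw
  induction hd : G₁.dist r₁ v using Nat.strong_induction_on generalizing v w with
  | _ d ih =>
  by_cases hv : v = r₁
  · rw [hv, eq_root hvw hv]
  have hw : w ≠ r₁ := fun hw => hv (eq_root hvw.symm hw)
  have hparent : G₁.parent r₁ v = G₁.parent r₁ w := by
    refine ih _ ?_ ?_ rfl
    · have := (hT₁.connected.parent_spec hv).2
      omega
    · rw [← (hmap hv).2, ← (hmap hw).2, hvw]
  refine (hf (G₁.parent r₁ v)).injOn ?_ ?_ hvw
  · exact hT₁.mem_children_iff.mpr ⟨hv, rfl⟩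
  · exact hT₁.mem_children_iff.mpr ⟨hw, hparent.symm⟩

lemma IsTree.surjective_of_bijOn_children (hT₂ : G₂.IsTree)
    (hroot : f r₁ = r₂) (hf : ∀ v, Set.BijOn f (G₁.children r₁ v) (G₂.children r₂ (f v))) :
    f.Surjective := by
  intro v'
  induction hd : G₂.dist r₂ v' using Nat.strong_induction_on generalizing v' with
  | _ d ih =>
  by_cases hv' : v' = r₂
  · exact ⟨r₁, hroot.trans hv'.symm⟩
  have hlt : G₂.dist r₂ (G₂.parent r₂ v') < d := by
    have := (hT₂.connected.parent_spec hv').2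
    omega
  obtain ⟨p, hp⟩ := ih _ hlt _ rfl
  obtain ⟨v, hv, rfl⟩ := (hf p).surjOn (hT₂.mem_children_iff.mpr ⟨hv', hp.symm⟩)
  exact ⟨v, rfl⟩

lemma IsTree.nonempty_iso_of_bijOn_children (hT₁ : G₁.IsTree) (hT₂ : G₂.IsTree)
    (hroot : f r₁ = r₂) (hf : ∀ v, Set.BijOn f (G₁.children r₁ v) (G₂.children r₂ (f v))) :
    Nonempty (G₁ ≃g G₂) := by
  have hinj := hT₁.injective_of_bijOn_children hT₂ hroot hf
  have mem_children_iff : ∀ {v w}, f w ∈ G₂.children r₂ (f v) ↔ w ∈ G₁.children r₁ v := by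
    refine fun {v w} => ⟨fun h => ?_, fun h => (hf v).mapsTo h⟩
    obtain ⟨hw', hparent⟩ := hT₂.mem_children_iff.mp h
    have hw : w ≠ r₁ := by rintro rfl; exact hw' hroot
    rw [(hT₁.map_parent_of_bijOn_children hT₂ hf hw).2] at hparent
    exact hT₁.mem_children_iff.mpr ⟨hw, hinj hparent⟩
  refine ⟨⟨Equiv.ofBijective f ⟨hinj, hT₂.surjective_of_bijOn_children hroot hf⟩, ?_⟩⟩
  intro v w
  change G₂.Adj (f v) (f w) ↔ G₁.Adj v w
  rw [hT₁.adj_iff_mem_children (r := r₁), hT₂.adj_iff_mem_children (r := r₂), mem_children_iff,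
    mem_children_iff]

end RootedIso

section TreeLift

variable {V₁ V₂ : Type*} {G₁ : SimpleGraph V₁} {G₂ : SimpleGraph V₂} {r₁ : V₁} {r₂ : V₂}

open Classical in
noncomputable def liftAlongTree (hG₁ : G₁.Connected) (r₁ : V₁) (r₂ : V₂)
    (m : V₁ → V₂ → V₁ → V₂) (v : V₁) : V₂ :=
  if v = r₁ then r₂
  else m (G₁.parent r₁ v) (liftAlongTree hG₁ r₁ r₂ m (G₁.parent r₁ v)) v
termination_by G₁.dist r₁ v
decreasing_by
  have := (hG₁.parent_spec ‹¬v = r₁›).2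
  omega

lemma liftAlongTree_root (hG₁ : G₁.Connected) (m : V₁ → V₂ → V₁ → V₂) :
    liftAlongTree hG₁ r₁ r₂ m r₁ = r₂ := by
  rw [liftAlongTree, if_pos rfl]

lemma liftAlongTree_of_ne (hG₁ : G₁.Connected) (m : V₁ → V₂ → V₁ → V₂) {v : V₁} (hv : v ≠ r₁) :
    liftAlongTree hG₁ r₁ r₂ m v =
      m (G₁.parent r₁ v) (liftAlongTree hG₁ r₁ r₂ m (G₁.parent r₁ v)) v := by
  rw [liftAlongTree, if_neg hv]

lemma IsTree.nonempty_iso_of_forall_exists_bijOn_children (hT₁ : G₁.IsTree) (hT₂ : G₂.IsTree)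
    (R : V₁ → V₂ → Prop) (hroot : R r₁ r₂)
    (hR : ∀ v v', R v v' → ∃ g : V₁ → V₂,
      Set.BijOn g (G₁.children r₁ v) (G₂.children r₂ v') ∧ ∀ w ∈ G₁.children r₁ v, R w (g w)) :
    Nonempty (G₁ ≃g G₂) := by
  have : Nonempty V₂ := ⟨r₂⟩
  choose! m hm using hR
  set f := liftAlongTree hT₁.connected r₁ r₂ m
  have hf_root : f r₁ = r₂ := liftAlongTree_root _ _
  have hf_child : ∀ {v w}, w ∈ G₁.children r₁ v → f w = m v (f v) w := fun hw => by
    obtain ⟨hne, rfl⟩ := hT₁.mem_children_iff.mp hw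
    exact liftAlongTree_of_ne _ _ hne
  have hR_f : ∀ v, R v (f v) := by
    intro v
    induction hd : G₁.dist r₁ v using Nat.strong_induction_on generalizing v with
    | _ d ih =>
    by_cases hv : v = r₁
    · rw [hv, hf_root]
      exact hroot
    have hspec := hT₁.connected.parent_spec hv
    have hchild : v ∈ G₁.children r₁ (G₁.parent r₁ v) := ⟨hspec.1, hspec.2.symm⟩
    rw [hf_child hchild]
    exact (hm _ _ (ih _ (by omega) _ rfl)).2 v hchild
  refine hT₁.nonempty_iso_of_bijOn_children hT₂ hf_root fun v => ?_
  exact (hm v (f v) (hR_f v)).1.congr fun w hw => (hf_child hw).symm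

end TreeLift

lemma Iso.neighborFinset_apply {V₁ V₂ : Type*} [Fintype V₁] [Fintype V₂] {G₁ : SimpleGraph V₁}
    {G₂ : SimpleGraph V₂} [DecidableRel G₁.Adj] [DecidableRel G₂.Adj] (φ : G₁ ≃g G₂) (v : V₁) :
    G₂.neighborFinset (φ v) = (G₁.neighborFinset v).map φ.toEquiv.toEmbedding := by
  ext w
  obtain ⟨u, rfl⟩ := φ.surjective w
  rw [mem_neighborFinset, φ.map_adj_iff, ← mem_neighborFinset]
  exact (Finset.mem_map' φ.toEquiv.toEmbedding).symm

end SimpleGraph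

lemma Finset.exists_bijOn_of_map_val_eq {α β γ : Type*} [Nonempty β] {s : Finset α}
    {t : Finset β} {f : α → γ} {g : β → γ} (h : s.val.map f = t.val.map g) :
    ∃ σ : α → β, Set.BijOn σ s t ∧ ∀ a ∈ s, f a = g (σ a) := by
  classical
  induction s using Finset.induction_on generalizing t with
  | empty =>
    obtain rfl : t = ∅ := by simpa [eq_comm (a := (0 : Multiset γ))] using h
    exact ⟨fun _ => Classical.arbitrary β, by simp, by simp⟩
  | insert a s ha ih =>
    obtain ⟨b, hb, hgb⟩ : ∃ b ∈ t, g b = f a :=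
      Multiset.mem_map.mp (h ▸ Multiset.mem_map_of_mem f (mem_insert_self a s))
    rw [← insert_erase hb] at h ⊢
    rw [insert_val_of_notMem ha, insert_val_of_notMem (notMem_erase b t), Multiset.map_cons,
      Multiset.map_cons, hgb, Multiset.cons_inj_right] at h
    obtain ⟨σ, hσ, hσf⟩ := ih h
    have hσ_eq : Set.EqOn σ (Function.update σ a b) s := fun x hx =>
      (Function.update_of_ne (ne_of_mem_of_not_mem hx ha) b σ).symm
    refine ⟨Function.update σ a b, ?_, ?_⟩
    · simpa [coe_insert] using (hσ.congr hσ_eq).insert (f := Function.update σ a b) (a := a)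
        (by simp)
    · intro x hx
      rcases mem_insert.mp hx with rfl | hx
      · simp [hgb]
      · rw [← hσ_eq hx]
        exact hσf x hx

def HasNonzeroColor : (l : ℕ) → LblT l → Prop
  | 0, x => @Ne ℕ x 0
  | l + 1, x => HasNonzeroColor l x.1 ∨ ∃ y ∈ x.2, HasNonzeroColor l y

lemma baseColor_singleton {α : Type} [DecidableEq α] (r i : α) :
    baseColor [r] i = if r = i then 1 else 0 := by
  simp [baseColor, List.range_succ]

open SimpleGraph

lemma hasNonzeroColor_sLabel_iff {G : SimpleGraph V} [DecidableRel G.Adj] (hG : G.Connected)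
    (r : V) (l : ℕ) (i : V) :
    HasNonzeroColor l (sLabel G (baseColor [r]) l i) ↔ G.dist r i ≤ l := by
  induction l generalizing i with
  | zero =>
    change baseColor [r] i ≠ 0 ↔ _
    rw [baseColor_singleton, Nat.le_zero, hG.dist_eq_zero_iff]
    split_ifs <;> simp_all
  | succ l ih =>
    change HasNonzeroColor l (sLabel G (baseColor [r]) l i) ∨
      (∃ y ∈ (G.neighborFinset i).val.map (sLabel G (baseColor [r]) l), HasNonzeroColor l y) ↔ _
    simp only [Multiset.mem_map, Finset.mem_val, mem_neighborFinset, exists_exists_and_eq_and, ih,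
      hG.dist_le_add_one_iff]

section Labels

variable {V₁ V₂ : Type} [Fintype V₁] [Fintype V₂] {G₁ : SimpleGraph V₁} {G₂ : SimpleGraph V₂}
  [DecidableRel G₁.Adj] [DecidableRel G₂.Adj]

lemma sLabel_eq_of_le {c₁ : V₁ → ℕ} {c₂ : V₂ → ℕ} {a : V₁} {b : V₂} {l L : ℕ} (hlL : l ≤ L)
    (h : sLabel G₁ c₁ L a = sLabel G₂ c₂ L b) : sLabel G₁ c₁ l a = sLabel G₂ c₂ l b := by
  induction hlL with
  | refl => exact h
  | step _ ih => exact ih (congrArg Prod.fst h)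

lemma exists_bijOn_neighborSet_of_sRow_eq {c₁ : V₁ → ℕ} {c₂ : V₂ → ℕ} {j : V₁} {j' : V₂}
    (h : sRow G₁ c₁ j = sRow G₂ c₂ j') :
    ∃ τ : V₁ → V₂, Set.BijOn τ (G₁.neighborSet j) (G₂.neighborSet j') ∧
      ∀ w ∈ G₁.neighborSet j, sRow G₁ c₁ w = sRow G₂ c₂ (τ w) := by
  have : Nonempty V₂ := ⟨j'⟩
  have hL : ∀ L, (G₁.neighborFinset j).val.map (sLabel G₁ c₁ L) =
      (G₂.neighborFinset j').val.map (sLabel G₂ c₂ L) :=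
    fun L => congrArg Prod.snd (congrFun h (L + 1))
  choose τ hτ hτ_eq using fun L => Finset.exists_bijOn_of_map_val_eq (hL L)
  -- there are finitely many maps `V₁ → V₂`, so one matching works at arbitrarily high levels
  obtain ⟨g, hg⟩ := Finite.exists_infinite_fiber τ
  have hcofinal : ∀ l, ∃ L, l ≤ L ∧ τ L = g := fun l =>
    let ⟨L, hL, hlL⟩ := (Set.infinite_coe_iff.mp hg).exists_gt l
    ⟨L, hlL.le, hL⟩
  obtain ⟨L₀, -, hL₀⟩ := hcofinal 0
  refine ⟨g, by simpa [hL₀] using hτ L₀, fun w hw => funext fun l => ?_⟩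
  obtain ⟨L, hlL, rfl⟩ := hcofinal l
  exact sLabel_eq_of_le hlL (hτ_eq L w (by simpa using hw))

lemma sLabel_comp_iso (φ : G₁ ≃g G₂) (c : V₂ → ℕ) (l : ℕ) (i : V₁) :
    sLabel G₁ (c ∘ φ) l i = sLabel G₂ c l (φ i) := by
  induction l generalizing i with
  | zero => rfl
  | succ l ih =>
    refine Prod.ext (ih i) ?_
    change (G₁.neighborFinset i).val.map (sLabel G₁ (c ∘ φ) l) =
      (G₂.neighborFinset (φ i)).val.map (sLabel G₂ c l)
    rw [φ.neighborFinset_apply, Finset.map_val, Multiset.map_map]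
    exact Multiset.map_congr rfl fun j _ => ih j

variable [DecidableEq V₁] [DecidableEq V₂]

lemma dist_eq_of_sRow_eq (hG₁ : G₁.Connected) (hG₂ : G₂.Connected) {r₁ a : V₁} {r₂ b : V₂}
    (h : sRow G₁ (baseColor [r₁]) a = sRow G₂ (baseColor [r₂]) b) :
    G₁.dist r₁ a = G₂.dist r₂ b :=
  eq_of_forall_ge_iff fun l => by
    rw [← hasNonzeroColor_sLabel_iff hG₁, ← hasNonzeroColor_sLabel_iff hG₂]
    exact iff_of_eq (congrArg _ (congrFun h l))

lemma exists_bijOn_children_of_sRow_eq (hG₁ : G₁.Connected) (hG₂ : G₂.Connected)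
    {r₁ j : V₁} {r₂ j' : V₂} (h : sRow G₁ (baseColor [r₁]) j = sRow G₂ (baseColor [r₂]) j') :
    ∃ τ : V₁ → V₂, Set.BijOn τ (G₁.children r₁ j) (G₂.children r₂ j') ∧
      ∀ w ∈ G₁.children r₁ j, sRow G₁ (baseColor [r₁]) w = sRow G₂ (baseColor [r₂]) (τ w) := by
  obtain ⟨τ, hτ, hτ_row⟩ := exists_bijOn_neighborSet_of_sRow_eq h
  refine ⟨τ, ?_, fun w hw => hτ_row w hw.1⟩
  convert hτ.subset_right (r := G₂.children r₂ j') Set.inter_subset_left using 1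
  ext w
  refine and_congr_right fun hw => ?_
  simp only [Set.mem_preimage, children, Set.mem_inter_iff, Set.mem_ofPred_eq, hτ.mapsTo hw,
    true_and, dist_eq_of_sRow_eq hG₁ hG₂ h, dist_eq_of_sRow_eq hG₁ hG₂ (hτ_row w hw)]

lemma nonempty_iso_of_sRow_eq (hT₁ : G₁.IsTree) (hT₂ : G₂.IsTree) {r₁ : V₁} {r₂ : V₂}
    (h : sRow G₁ (baseColor [r₁]) r₁ = sRow G₂ (baseColor [r₂]) r₂) : Nonempty (G₁ ≃g G₂) :=
  hT₁.nonempty_iso_of_forall_exists_bijOn_children hT₂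
    (fun a b => sRow G₁ (baseColor [r₁]) a = sRow G₂ (baseColor [r₂]) b) h
    fun _ _ => exists_bijOn_children_of_sRow_eq hT₁.connected hT₂.connected

end Labels

lemma baseColor_map {α β : Type} [DecidableEq α] [DecidableEq β] {f : α → β} (hf : f.Injective)
    (pref : List α) (i : α) : baseColor (pref.map f) (f i) = baseColor pref i := by
  simp [baseColor, List.getElem?_map, hf.eq_iff]

section Fingerprint

variable {V₁ V₂ : Type} [Fintype V₁] [DecidableEq V₁] [Fintype V₂] [DecidableEq V₂]
  {G₁ : SimpleGraph V₁} {G₂ : SimpleGraph V₂} [DecidableRel G₁.Adj] [DecidableRel G₂.Adj]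

lemma sFingerprint_one (G : SimpleGraph V) [DecidableRel G.Adj] :
    sFingerprint G 1 =
      Finset.univ.val.map fun r => Finset.univ.val.map (sRow G (baseColor [r])) := by
  simp only [sFingerprint, sAgg, List.not_mem_nil, not_false_eq_true, Finset.filter_true,
    List.nil_append]
  rfl

lemma exists_sRow_eq_of_sFingerprint_one_eq (h : sFingerprint G₁ 1 = sFingerprint G₂ 1)
    (r₁ : V₁) : ∃ r₂, sRow G₁ (baseColor [r₁]) r₁ = sRow G₂ (baseColor [r₂]) r₂ := by
  rw [sFingerprint_one, sFingerprint_one] at h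
  obtain ⟨r₂, -, hr₂⟩ :=
    Multiset.mem_map.mp (h ▸ Multiset.mem_map_of_mem _ (Finset.mem_univ_val r₁))
  obtain ⟨i, -, hi⟩ :=
    Multiset.mem_map.mp (hr₂ ▸ Multiset.mem_map_of_mem _ (Finset.mem_univ_val r₁))
  -- at level `0`, the only row of the matrix of `r₂` carrying colour `1` is the row of `r₂`
  have hcolor : baseColor [r₂] i = baseColor [r₁] r₁ := congrFun hi 0
  obtain rfl : r₂ = i := by simpa [baseColor_singleton] using hcolor
  exact ⟨r₂, hi.symm⟩

lemma sAgg_map (φ : G₁ ≃g G₂) (r : ℕ) (pref : List V₁) :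
    sAgg G₁ r pref = sAgg G₂ r (pref.map φ) := by
  induction r generalizing pref with
  | zero =>
    change Finset.univ.val.map (sRow G₁ (baseColor pref)) =
      Finset.univ.val.map (sRow G₂ (baseColor (pref.map φ)))
    rw [← Multiset.map_univ_val_equiv φ.toEquiv, Multiset.map_map]
    refine Multiset.map_congr rfl fun i _ => funext fun l => ?_
    change sLabel G₁ _ l i = sLabel G₂ _ l (φ i)
    rw [← sLabel_comp_iso]
    congr 2
    exact funext fun j => (baseColor_map φ.injective pref j).symm
  | succ r ih =>
    change (Finset.univ.filter (· ∉ pref)).val.map (fun i => sAgg G₁ r (pref ++ [i])) =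
      (Finset.univ.filter (· ∉ pref.map φ)).val.map (fun j => sAgg G₂ r (pref.map φ ++ [j]))
    have hfilter : Finset.univ.filter (· ∉ pref.map φ) =
        (Finset.univ.filter (· ∉ pref)).map φ.toEquiv.toEmbedding := by
      rw [← Finset.map_univ_equiv φ.toEquiv, Finset.filter_map]
      congr 1
      exact Finset.filter_congr fun i _ => not_congr (List.mem_map_of_injective φ.injective)
    rw [hfilter, Finset.map_val, Multiset.map_map]
    refine Multiset.map_congr rfl fun i _ => ?_
    simp [ih]

lemma sFingerprint_eq_of_iso (φ : G₁ ≃g G₂) (k : ℕ) : sFingerprint G₁ k = sFingerprint G₂ k :=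
  sAgg_map φ k []

end Fingerprint

/-- Two finite trees are isomorphic if and only if they are `𝔰¹`-equivalent, i.e. their
`𝔰¹` fingerprints (the multisets of node label matrices) coincide. -/
theorem trees_iso_iff_s1_equiv {V₁ V₂ : Type} [Fintype V₁] [DecidableEq V₁]
    [Fintype V₂] [DecidableEq V₂] (G₁ : SimpleGraph V₁) (G₂ : SimpleGraph V₂)
    [DecidableRel G₁.Adj] [DecidableRel G₂.Adj]
    (h₁ : G₁.IsTree) (h₂ : G₂.IsTree) :
    Nonempty (G₁ ≃g G₂) ↔ sFingerprint G₁ 1 = sFingerprint G₂ 1 := by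
  refine ⟨fun ⟨φ⟩ => sFingerprint_eq_of_iso φ 1, fun h => ?_⟩
  obtain ⟨r₁⟩ := h₁.connected.nonempty
  obtain ⟨r₂, hr⟩ := exists_sRow_eq_of_sFingerprint_one_eq h r₁
  exact nonempty_iso_of_sRow_eq h₁ h₂ hr
end

section
/- Let G₁ and G₂ be two graphs on n nodes and let k ≥ 1. Then 𝔰ᵏ_{G₁} = 𝔰ᵏ_{G₂} holds if and only if 𝔰ᵏ_{\overline{G₁}} = 𝔰ᵏ_{\overline{G₂}}, where \overline{G} denotes the complement graph. -/
variable {V : Type} [Fintype V] [DecidableEq V]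

section Aux

variable {V : Type} [Fintype V] [DecidableEq V]

instance instDecEqLblT : (l : ℕ) → DecidableEq (LblT l)
  | 0 => inferInstanceAs (DecidableEq ℕ)
  | l + 1 =>
    have := instDecEqLblT l
    inferInstanceAs (DecidableEq (LblT l × Multiset (LblT l)))

/-- Level-wise transformation computing complement labels from labels,
given the global multisets `M` of labels at each level. -/
def complF (M : (l : ℕ) → Multiset (LblT l)) : (l : ℕ) → LblT l → LblT l
  | 0, a => a
  | l + 1, p =>
      (((complF M l (p : LblT l × Multiset (LblT l)).1,
        (M l).map (complF M l) -
          (complF M l (p : LblT l × Multiset (LblT l)).1 ::ₘ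
            (p : LblT l × Multiset (LblT l)).2.map (complF M l))) :
        LblT l × Multiset (LblT l)) : LblT (l + 1))

lemma univ_val_split (G : SimpleGraph V) [DecidableRel G.Adj] (i : V) :
    (Finset.univ.val : Multiset V) =
      i ::ₘ ((G.neighborFinset i).val + (Gᶜ.neighborFinset i).val) := by
  have hd : Disjoint (G.neighborFinset i) (Gᶜ.neighborFinset i) := by
    simp only [Finset.disjoint_left, SimpleGraph.mem_neighborFinset,
      SimpleGraph.compl_adj]
    tauto
  have hi : i ∉ G.neighborFinset i ∪ Gᶜ.neighborFinset i := by
    simp [SimpleGraph.mem_neighborFinset, SimpleGraph.compl_adj]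
  have huniv : insert i (G.neighborFinset i ∪ Gᶜ.neighborFinset i) = Finset.univ := by
    ext j
    by_cases h : j = i
    · simp [h]
    · simp only [Finset.mem_insert, Finset.mem_union, SimpleGraph.mem_neighborFinset,
        SimpleGraph.compl_adj, Finset.mem_univ, iff_true]
      by_cases hadj : G.Adj i j
      · tauto
      · exact Or.inr (Or.inr ⟨fun hij => h hij.symm, hadj⟩)
  rw [← huniv, Finset.insert_val_of_notMem hi, ← Finset.disjUnion_eq_union _ _ hd]
  rfl

lemma sLabel_compl (G : SimpleGraph V) [DecidableRel G.Adj] (c : V → ℕ) (l : ℕ) (i : V) :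
    sLabel Gᶜ c l i =
      complF (fun l' => Finset.univ.val.map (sLabel G c l')) l (sLabel G c l i) := by
  induction l generalizing i with
  | zero => rfl
  | succ l ih =>
    set M : (l' : ℕ) → Multiset (LblT l') := fun l' => Finset.univ.val.map (sLabel G c l')
    show ((sLabel Gᶜ c l i, (Gᶜ.neighborFinset i).val.map (sLabel Gᶜ c l)) :
        LblT l × Multiset (LblT l)) =
      ((complF M l (sLabel G c l i),
        (M l).map (complF M l) -
          (complF M l (sLabel G c l i) ::ₘ
            ((G.neighborFinset i).val.map (sLabel G c l)).map (complF M l))) :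
        LblT l × Multiset (LblT l))
    have h1 : sLabel Gᶜ c l i = complF M l (sLabel G c l i) := ih i
    refine Prod.ext h1 ?_
    show (Gᶜ.neighborFinset i).val.map (sLabel Gᶜ c l) =
      (M l).map (complF M l) -
        (complF M l (sLabel G c l i) ::ₘ
          ((G.neighborFinset i).val.map (sLabel G c l)).map (complF M l))
    have hmap : ∀ (s : Multiset V), s.map (sLabel Gᶜ c l) =
        s.map (fun j => complF M l (sLabel G c l j)) := fun s =>
      Multiset.map_congr rfl (fun j _ => ih j)
    have hMl : (M l).map (complF M l) =
        Finset.univ.val.map (fun j => complF M l (sLabel G c l j)) := by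
      show (Finset.univ.val.map (sLabel G c l)).map (complF M l) = _
      rw [Multiset.map_map]; rfl
    have hN : ((G.neighborFinset i).val.map (sLabel G c l)).map (complF M l) =
        (G.neighborFinset i).val.map (fun j => complF M l (sLabel G c l j)) := by
      rw [Multiset.map_map]; rfl
    have key : Finset.univ.val.map (fun j => complF M l (sLabel G c l j)) =
        (complF M l (sLabel G c l i) ::ₘ
          (G.neighborFinset i).val.map (fun j => complF M l (sLabel G c l j))) +
          (Gᶜ.neighborFinset i).val.map (fun j => complF M l (sLabel G c l j)) := by
      rw [univ_val_split G i, Multiset.map_cons, Multiset.map_add, Multiset.cons_add]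
    rw [hmap, hMl, hN, key, add_tsub_cancel_left]

/-- `r`-fold aggregation-level transformation computing the complement aggregate. -/
def complAgg : (r : ℕ) → AggT r → AggT r
  | 0, m => (m : Multiset ((l : ℕ) → LblT l)).map
      (fun row l => complF (fun l' => (m : Multiset ((l : ℕ) → LblT l)).map (· l')) l (row l))
  | r + 1, m => ((m : Multiset (AggT r)).map (complAgg r) : Multiset (AggT r))

lemma sAgg_compl (G : SimpleGraph V) [DecidableRel G.Adj] (r : ℕ) (pref : List V) :
    sAgg Gᶜ r pref = complAgg r (sAgg G r pref) := by
  induction r generalizing pref with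
  | zero =>
    show Finset.univ.val.map (fun i => sRow Gᶜ (baseColor pref) i) = _
    have hM : ∀ l' : ℕ,
        ((Finset.univ.val.map (fun i => sRow G (baseColor pref) i)).map (· l')) =
          Finset.univ.val.map (sLabel G (baseColor pref) l') := by
      intro l'; rw [Multiset.map_map]; rfl
    show _ = (Finset.univ.val.map (fun i => sRow G (baseColor pref) i)).map
      (fun row l => complF (fun l' =>
        (Finset.univ.val.map (fun i => sRow G (baseColor pref) i)).map (· l')) l (row l))
    rw [Multiset.map_map]
    refine Multiset.map_congr rfl (fun i _ => ?_)
    funext l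
    simp only [Function.comp, sRow]
    rw [sLabel_compl G (baseColor pref) l i]
    congr 1
    funext l'
    exact (hM l').symm
  | succ r ih =>
    show (Finset.univ.filter (fun i => i ∉ pref)).val.map (fun i => sAgg Gᶜ r (pref ++ [i])) =
      ((Finset.univ.filter (fun i => i ∉ pref)).val.map
        (fun i => sAgg G r (pref ++ [i]))).map (complAgg r)
    rw [Multiset.map_map]
    exact Multiset.map_congr rfl (fun i _ => ih (pref ++ [i]))

lemma sFingerprint_compl (G : SimpleGraph V) [DecidableRel G.Adj] (k : ℕ) :
    sFingerprint Gᶜ k = complAgg k (sFingerprint G k) :=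
  sAgg_compl G k []

lemma sFingerprint_congr (G G' : SimpleGraph V) [i1 : DecidableRel G.Adj]
    [i2 : DecidableRel G'.Adj] (h : G = G') (k : ℕ) :
    sFingerprint G k = sFingerprint G' k := by
  subst h
  exact congrArg (fun i => @sFingerprint V _ _ G i k) (Subsingleton.elim i1 i2)

end Aux

/-- The `𝔰ᵏ` fingerprints of two graphs coincide iff the `𝔰ᵏ` fingerprints of their
complements coincide. -/
theorem sk_equiv_iff_complement_sk_equiv {V : Type} [Fintype V] [DecidableEq V]
    (G₁ G₂ : SimpleGraph V) [DecidableRel G₁.Adj] [DecidableRel G₂.Adj]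
    (k : ℕ) (hk : 1 ≤ k) :
    sFingerprint G₁ k = sFingerprint G₂ k ↔
      sFingerprint G₁ᶜ k = sFingerprint G₂ᶜ k := by
  constructor
  · intro h
    rw [sFingerprint_compl, sFingerprint_compl, h]
  · intro h
    have h2 : sFingerprint G₁ᶜᶜ k = sFingerprint G₂ᶜᶜ k := by
      rw [sFingerprint_compl G₁ᶜ, sFingerprint_compl G₂ᶜ, h]
    exact (sFingerprint_congr _ _ (compl_compl G₁) k).symm.trans
      (h2.trans (sFingerprint_congr _ _ (compl_compl G₂) k))
end

section
/- Suppose 𝔰ᵏ_{G₁}(i₁,…,i_k) = 𝔰ᵏ_{G₂}(j₁,…,j_k) via a bijection π of nodes matching rows, and suppose nodes i ∈ V₁ and j = π(i) ∈ V₂ have matching rows. Then for every finite 'pattern' (sequence of initial labels), the number of walks in G₁ ending at i whose node sequence has that pattern equals the number of such walks in G₂ ending at j. -/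
variable {V : Type} [Fintype V] [DecidableEq V]

/-- Number of walks starting at `i` whose node sequence realizes the given sequence of
base colors (`pat`). -/
def patCount (G : SimpleGraph V) [DecidableRel G.Adj] (c : V → ℕ) :
    List ℕ → V → ℕ
  | [], _ => 0
  | [a], i => if c i = a then 1 else 0
  | a :: b :: rest, i =>
      if c i = a then ∑ j ∈ G.neighborFinset i, patCount G c (b :: rest) j else 0

/-! A walk count with a pattern of length `n` can be read off the depth-`n` label of its
start node: the label at depth `l + 1` records the label at depth `l` (hence, at the bottom,
the base color) together with the multiset of depth-`l` labels of the neighbours, which is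
all the recursion of `patCount` looks at. Hence equal labels give equal counts, across
different graphs and base colorings alike. -/

def LblT.color : (l : ℕ) → LblT l → ℕ
  | 0, x => x
  | l + 1, x => LblT.color l x.1

def LblT.patCount : (p : List ℕ) → LblT p.length → ℕ
  | [], _ => 0
  | [a], x => if LblT.color 1 x = a then 1 else 0
  | a :: b :: rest, x =>
      if LblT.color _ x = a then
        (x.2.map (LblT.patCount (b :: rest))).sum
      else 0

section

variable {W : Type} [Fintype W] (G : SimpleGraph W) [DecidableRel G.Adj] (c : W → ℕ)

theorem color_sLabel : ∀ (l : ℕ) (i : W), LblT.color l (sLabel G c l i) = c i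
  | 0, _ => rfl
  | l + 1, i => color_sLabel l i

theorem patCount_eq_patCount_sLabel :
    ∀ (p : List ℕ) (i : W), patCount G c p i = LblT.patCount p (sLabel G c p.length i)
  | [], _ => rfl
  | [a], i => by
      change ite _ _ _ = ite (LblT.color 1 (sLabel G c 1 i) = a) _ _
      rw [color_sLabel]
  | a :: b :: rest, i => by
      change ite _ _ _ = ite (LblT.color _ (sLabel G c (b :: rest).length.succ i) = a) _ _
      rw [color_sLabel]
      congr 1
      change _ = (((G.neighborFinset i).val.map (sLabel G c (b :: rest).length)).map
        (LblT.patCount (b :: rest))).sum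
      rw [Multiset.map_map]
      exact Finset.sum_congr rfl fun j _ => patCount_eq_patCount_sLabel (b :: rest) j

end

theorem patCount_eq_of_sLabel_eq {W₁ W₂ : Type} [Fintype W₁] [Fintype W₂]
    {G₁ : SimpleGraph W₁} {G₂ : SimpleGraph W₂} [DecidableRel G₁.Adj] [DecidableRel G₂.Adj]
    {c₁ : W₁ → ℕ} {c₂ : W₂ → ℕ} {p : List ℕ} {i : W₁} {j : W₂}
    (h : sLabel G₁ c₁ p.length i = sLabel G₂ c₂ p.length j) :
    patCount G₁ c₁ p i = patCount G₂ c₂ p j := by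
  rw [patCount_eq_patCount_sLabel, patCount_eq_patCount_sLabel, h]

theorem matching_labels_preserve_pattern_walk_counts_general
    {V₁ V₂ : Type} [Fintype V₁] [DecidableEq V₁] [Fintype V₂] [DecidableEq V₂]
    (G₁ : SimpleGraph V₁) (G₂ : SimpleGraph V₂)
    [DecidableRel G₁.Adj] [DecidableRel G₂.Adj] (k : ℕ)
    (v₁ : Fin k → V₁) (v₂ : Fin k → V₂)
    (π : V₁ ≃ V₂)
    (hmatch : ∀ (i : V₁) (l : ℕ),
      sLabel G₁ (baseColor (List.ofFn v₁)) l i =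
        sLabel G₂ (baseColor (List.ofFn v₂)) l (π i)) :
    ∀ (pat : List ℕ) (i : V₁),
      patCount G₁ (baseColor (List.ofFn v₁)) pat.reverse i =
        patCount G₂ (baseColor (List.ofFn v₂)) pat.reverse (π i) :=
  fun _ i => patCount_eq_of_sLabel_eq (hmatch i _)

/-- If the `𝔰ᵏ`-label matrices of `G₁` (with distinguished nodes `v₁`) and `G₂` (with
distinguished nodes `v₂`) match under the node bijection `π`, then for every pattern
of base colors, the numbers of walks with that pattern ending at `i` in `G₁` and at
`π i` in `G₂` agree (a walk ending at a node with pattern `pat` is a walk starting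
there with the reversed pattern, the graphs being undirected). -/
theorem matching_labels_preserve_pattern_walk_counts
    {V₁ V₂ : Type} [Fintype V₁] [DecidableEq V₁] [Fintype V₂] [DecidableEq V₂]
    (G₁ : SimpleGraph V₁) (G₂ : SimpleGraph V₂)
    [DecidableRel G₁.Adj] [DecidableRel G₂.Adj] (k : ℕ)
    (v₁ : Fin k → V₁) (v₂ : Fin k → V₂)
    (hv₁ : Function.Injective v₁) (hv₂ : Function.Injective v₂)
    (π : V₁ ≃ V₂)
    (hmatch : ∀ (i : V₁) (l : ℕ),
      sLabel G₁ (baseColor (List.ofFn v₁)) l i =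
        sLabel G₂ (baseColor (List.ofFn v₂)) l (π i)) :
    ∀ (pat : List ℕ) (i : V₁),
      patCount G₁ (baseColor (List.ofFn v₁)) pat.reverse i =
        patCount G₂ (baseColor (List.ofFn v₂)) pat.reverse (π i) :=
  matching_labels_preserve_pattern_walk_counts_general G₁ G₂ k v₁ v₂ π hmatch
end
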